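/- In any triangulation of a connected closed surface, the subgraph G₁ of the dual graph induced by the faces whose z-monodromy is the identity permutation contains no cycle, i.e., G₁ is a forest. -/

import Mathlib

open Finset

/-- A (combinatorial) triangulation of a connected closed surface:
a finite set of triangular faces such that every edge lies in exactly two
faces, two distinct faces meet in at most an edge, and the dual graph is
connected. -/
structure Triangulation (V : Type) [Fintype V] [DecidableEq V] where
  faces : Finset (Finset V)
  faces_nonempty : faces.Nonempty
  card_eq : ∀ F ∈ faces, F.card = 3
  edge_two_faces : ∀ e : Finset V, e.card = 2 → (∃ F ∈ faces, e ⊆ F) →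
      (faces.filter fun F => e ⊆ F).card = 2
  inter_le : ∀ F ∈ faces, ∀ F' ∈ faces, F ≠ F' → (F ∩ F').card ≤ 2
  connected : ∀ F ∈ faces, ∀ F' ∈ faces,
      Relation.ReflTransGen
        (fun A B => A ∈ faces ∧ B ∈ faces ∧ (A ∩ B).card = 2) F F'

namespace Triangulation

variable {V : Type} [Fintype V] [DecidableEq V] (T : Triangulation V)

/-- `e` is an edge of the triangulation. -/
def IsEdge (e : Finset V) : Prop := e.card = 2 ∧ ∃ F ∈ T.faces, e ⊆ F

/-- A zigzag sequence: consecutive edges are adjacent (distinct, sharing a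
vertex and a face), the faces containing consecutive pairs are distinct, and
edges two apart are disjoint. -/
def IsZigzagSeq (f : ℕ → Finset V) : Prop :=
  (∀ i, T.IsEdge (f i)) ∧
  (∀ i, f i ≠ f (i + 1) ∧ (f i ∩ f (i + 1)).Nonempty ∧
      ∃ F ∈ T.faces, f i ⊆ F ∧ f (i + 1) ⊆ F) ∧
  (∀ i, ∀ F ∈ T.faces, ∀ F' ∈ T.faces,
      f i ⊆ F → f (i + 1) ⊆ F → f (i + 1) ⊆ F' → f (i + 2) ⊆ F' → F ≠ F') ∧
  (∀ i, f i ∩ f (i + 2) = ∅)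

/-- A zigzag: a zigzag sequence together with its (minimal) period. -/
structure Zigzag where
  seq : ℕ → Finset V
  period : ℕ
  period_pos : 0 < period
  periodic : ∀ i, seq (i + period) = seq i
  period_min : ∀ m, 0 < m → (∀ i, seq (i + m) = seq i) → period ≤ m
  isZigzag : T.IsZigzagSeq seq

variable {T}

/-- Two zigzags are the same cyclic sequence (up to a shift). -/
def Zigzag.Equiv (Z Z' : T.Zigzag) : Prop := ∃ k, ∀ i, Z'.seq i = Z.seq (i + k)

/-- `Z'` is the reversal of `Z` (up to a shift). -/
def Zigzag.IsReverseOf (Z' Z : T.Zigzag) : Prop :=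
  ∃ k, ∀ i, Z'.seq i = Z.seq (k + Z.period - i % Z.period)

/-- The zigzag `Z` contains an edge of the face `F`. -/
def Zigzag.Meets (Z : T.Zigzag) (F : Finset V) : Prop := ∃ i, Z.seq i ⊆ F

/-- `F` is the `i`-th face of the face shadow of `Z`, i.e. the face containing
the `i`-th and `(i+1)`-st edges of `Z`. -/
def Zigzag.ShadowAt (Z : T.Zigzag) (i : ℕ) (F : Finset V) : Prop :=
  F ∈ T.faces ∧ Z.seq i ⊆ F ∧ Z.seq (i + 1) ⊆ F

/-- At position `i`, the zigzag `Z` traverses the oriented edge from `x`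
to `y` (the head `y` is the vertex shared with the next edge). -/
def Zigzag.Passes (Z : T.Zigzag) (i : ℕ) (x y : V) : Prop :=
  Z.seq i = {x, y} ∧ x ≠ y ∧ y ∈ Z.seq (i + 1)

variable (T)

/-- The triangulation is locally z-knotted in the face `F`:
`𝒵(F) = {Z, Z⁻¹}`. -/
def LocallyZKnotted (F : Finset V) : Prop :=
  (∃ Z : T.Zigzag, Z.Meets F) ∧
  ∀ Z Z' : T.Zigzag, Z.Meets F → Z'.Meets F → Z.Equiv Z' ∨ Z'.IsReverseOf Z

/-- The triangulation is z-knotted: it has exactly one zigzag up to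
reversal. -/
def ZKnotted : Prop :=
  Nonempty T.Zigzag ∧ ∀ Z Z' : T.Zigzag, Z.Equiv Z' ∨ Z'.IsReverseOf Z

/-- The z-monodromy relation of the face `F`: `M_F` sends the oriented edge
`(x,y)` of `F` to the oriented edge `(u,v)` of `F`.  Here `(u,v)` is the first
oriented edge of `F` occurring in the zigzag through `D_F⁻¹(x,y), (x,y)`
after `(x,y)`. -/
def MonodromyRel (F : Finset V) (x y u v : V) : Prop :=
  x ∈ F ∧ y ∈ F ∧
  ∃ Z : T.Zigzag, ∃ i j : ℕ,
    (∃ z, z ∈ F ∧ z ≠ x ∧ z ≠ y ∧ Z.Passes i z x) ∧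
    Z.Passes (i + 1) x y ∧
    i + 1 < j ∧ Z.Passes j u v ∧ u ∈ F ∧ v ∈ F ∧
    (∀ k, i + 1 < k → k < j → ∀ a b, a ∈ F → b ∈ F → ¬ Z.Passes k a b)

/-- The z-monodromy of `F` is the identity (type (M1)). -/
def MFIsId (F : Finset V) : Prop :=
  ∀ x y, x ∈ F → y ∈ F → x ≠ y → T.MonodromyRel F x y x y

/-- The z-monodromy of `F` is `D_F` (type (M2)). -/
def MFIsD (F : Finset V) : Prop :=
  ∀ x y z : V, ({x, y, z} : Finset V) = F → x ≠ y → y ≠ z → x ≠ z →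
    T.MonodromyRel F x y y z

/-- The z-monodromy of `F` is `D_F⁻¹` (type (M5)). -/
def MFIsDInv (F : Finset V) : Prop :=
  ∀ x y z : V, ({x, y, z} : Finset V) = F → x ≠ y → y ≠ z → x ≠ z →
    T.MonodromyRel F x y z x

/-- The z-monodromy of `F` is of type (M3):
`M_F = (-e₁,e₂,e₃)(-e₃,-e₂,e₁)` for a cycle `(e₁,e₂,e₃)` of `D_F`. -/
def MFIsM3 (F : Finset V) : Prop :=
  ∃ x y z : V, ({x, y, z} : Finset V) = F ∧ x ≠ y ∧ y ≠ z ∧ x ≠ z ∧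
    T.MonodromyRel F y x y z ∧ T.MonodromyRel F y z z x ∧
    T.MonodromyRel F z x y x ∧ T.MonodromyRel F x z z y ∧
    T.MonodromyRel F z y x y ∧ T.MonodromyRel F x y x z

/-- The z-monodromy of `F` is of type (M4):
`M_F = (e₁,-e₂)(e₂,-e₁)` with `e₃, -e₃` fixed, for a cycle `(e₁,e₂,e₃)`
of `D_F`. -/
def MFIsM4 (F : Finset V) : Prop :=
  ∃ x y z : V, ({x, y, z} : Finset V) = F ∧ x ≠ y ∧ y ≠ z ∧ x ≠ z ∧
    T.MonodromyRel F x y z y ∧ T.MonodromyRel F z y x y ∧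
    T.MonodromyRel F y z y x ∧ T.MonodromyRel F y x y z ∧
    T.MonodromyRel F z x z x ∧ T.MonodromyRel F x z x z

/-- The dual graph: vertices are faces, adjacent iff they share an edge. -/
def dualGraph : SimpleGraph {F : Finset V // F ∈ T.faces} where
  Adj A B := A ≠ B ∧ ((A : Finset V) ∩ (B : Finset V)).card = 2
  symm := by
    refine ⟨?_⟩
    intro A B h
    exact ⟨h.1.symm, by rw [Finset.inter_comm]; exact h.2⟩
  loopless := by refine ⟨?_⟩; intro A h; exact h.1 rfl

end Triangulation

/-! If `M_F = id`, a zigzag passing through `F` along the edges `ab, bc` comes back to `F` along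
`bc, ca` and then along `ca, ab`; so after entering `F` through one edge it leaves through each of
the other two before it uses the entry edge again. Given a cycle `F₀, …, F_{n-1}` in `G₁`, take the
zigzag witnessing `M_{F₀} = id` at the edge `F₀ ∩ F₁`: it enters `F₁` and does not meet `F₀` again
until it comes back through that edge. Within this window it therefore enters `F₂, …, F_{n-1}` in
turn and finally leaves `F_{n-1}` through `F_{n-1} ∩ F₀`, an edge of `F₀`, a contradiction. -/

lemma Finset.eq_sdiff_of_card_two {α : Type*} [DecidableEq α] {X H Y : Finset α}
    (hXH : X ⊆ H) (hXY : Disjoint X Y) (hHY : (H ∩ Y).Nonempty) (hH : H.card = 3)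
    (hX : X.card = 2) : X = H \ Y := by
  refine Finset.eq_of_subset_of_card_le (Finset.subset_sdiff.mpr ⟨hXH, hXY⟩) ?_
  have := hHY.card_pos
  rw [Finset.card_sdiff, Finset.inter_comm, hH, hX]
  omega

lemma Finset.eq_or_eq_or_eq_of_subset_triple {α : Type*} [DecidableEq α] {s : Finset α}
    {a b c : α} (hs : s ⊆ {a, b, c}) (h2 : s.card = 2) : s = {a, b} ∨ s = {b, c} ∨ s = {c, a} := by
  obtain ⟨x, y, hxy, rfl⟩ := Finset.card_eq_two.mp h2
  simp only [Finset.insert_subset_iff, Finset.singleton_subset_iff, Finset.mem_insert,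
    Finset.mem_singleton] at hs
  obtain ⟨hx | hx | hx, hy | hy | hy⟩ := hs <;> subst hx hy <;> simp_all [Finset.pair_comm]

namespace Triangulation

variable {V : Type} [Fintype V] [DecidableEq V] {T : Triangulation V}

lemma eq_or_eq_of_edge_subset {e A B C : Finset V} (he : e.card = 2)
    (hA : A ∈ T.faces) (hB : B ∈ T.faces) (hC : C ∈ T.faces)
    (heA : e ⊆ A) (heB : e ⊆ B) (heC : e ⊆ C) (hAB : A ≠ B) : C = A ∨ C = B := by
  have hpair : {A, B} = T.faces.filter (e ⊆ ·) :=
    Finset.eq_of_subset_of_card_le (by simp [Finset.insert_subset_iff, hA, hB, heA, heB])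
      (by rw [T.edge_two_faces e he ⟨A, hA, heA⟩, Finset.card_pair hAB])
  have hC' : C ∈ ({A, B} : Finset (Finset V)) := hpair ▸ Finset.mem_filter.mpr ⟨hC, heC⟩
  simpa using hC'

lemma eq_triple_of_mem {F : Finset V} (hF : F ∈ T.faces) {a b c : V}
    (ha : a ∈ F) (hb : b ∈ F) (hc : c ∈ F) (hab : a ≠ b) (hbc : b ≠ c) (hac : a ≠ c) :
    ({a, b, c} : Finset V) = F :=
  Finset.eq_of_subset_of_card_le (by simp [Finset.insert_subset_iff, ha, hb, hc])
    (by rw [T.card_eq F hF, Finset.card_eq_three.mpr ⟨a, b, c, hab, hac, hbc, rfl⟩])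

lemma inter_ne_inter {A B C : Finset V} (hA : A ∈ T.faces) (hB : B ∈ T.faces)
    (hC : C ∈ T.faces) (hAB : A ≠ B) (hBC : B ≠ C) (hCA : C ≠ A) (h2 : (A ∩ B).card = 2) :
    B ∩ C ≠ A ∩ B := by
  intro he
  rcases eq_or_eq_of_edge_subset h2 hA hB hC Finset.inter_subset_left Finset.inter_subset_right
    (he ▸ Finset.inter_subset_right) hAB with h | h
  · exact hCA h
  · exact hBC h.symm

namespace IsZigzagSeq

variable {f g : ℕ → Finset V}

lemma eq_sdiff (hf : T.IsZigzagSeq f) {H : Finset V} (hH : H ∈ T.faces) {i : ℕ}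
    (h1 : f (i + 1) ⊆ H) (h2 : f (i + 2) ⊆ H) : f (i + 2) = H \ f i := by
  obtain ⟨x, hx⟩ := (hf.2.1 i).2.1
  refine Finset.eq_sdiff_of_card_two h2 ?_ ⟨x, ?_⟩ (T.card_eq H hH) (hf.1 (i + 2)).1
  · rw [Finset.disjoint_iff_inter_eq_empty, Finset.inter_comm]
    exact hf.2.2.2 i
  · rw [Finset.mem_inter] at hx ⊢
    exact ⟨h1 hx.2, hx.1⟩

lemma apply_add_two_eq (hf : T.IsZigzagSeq f) (hg : T.IsZigzagSeq g) {i j : ℕ}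
    (h0 : f i = g j) (h1 : f (i + 1) = g (j + 1)) : f (i + 2) = g (j + 2) := by
  obtain ⟨-, -, A, hA, hA0, hA1⟩ := hf.2.1 i
  obtain ⟨-, -, Hf, hHf, hHf1, hHf2⟩ := hf.2.1 (i + 1)
  obtain ⟨-, -, Hg, hHg, hHg1, hHg2⟩ := hg.2.1 (j + 1)
  have hAHf : A ≠ Hf := hf.2.2.1 i A hA Hf hHf hA0 hA1 hHf1 hHf2
  have hAHg : A ≠ Hg := hg.2.2.1 j A hA Hg hHg (h0 ▸ hA0) (h1 ▸ hA1) hHg1 hHg2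
  have hHfg : Hg = Hf := by
    rcases eq_or_eq_of_edge_subset (hf.1 (i + 1)).1 hA hHf hHg hA1 hHf1 (h1 ▸ hHg1) hAHf with h | h
    · exact absurd h.symm hAHg
    · exact h
  rw [hf.eq_sdiff hHf hHf1 hHf2, hg.eq_sdiff hHg hHg1 hHg2, hHfg, h0]

lemma apply_add_eq (hf : T.IsZigzagSeq f) (hg : T.IsZigzagSeq g) {i j : ℕ}
    (h0 : f i = g j) (h1 : f (i + 1) = g (j + 1)) (m : ℕ) : f (i + m) = g (j + m) := by
  have key : ∀ m, f (i + m) = g (j + m) ∧ f (i + m + 1) = g (j + m + 1) := fun m => by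
    induction m with
    | zero => exact ⟨h0, h1⟩
    | succ k ih => exact ⟨ih.2, hf.apply_add_two_eq hg ih.1 ih.2⟩
  exact (key m).1

end IsZigzagSeq

namespace Zigzag

variable {Z : T.Zigzag}

lemma disjoint_seq_add_two (Z : T.Zigzag) (i : ℕ) : Disjoint (Z.seq i) (Z.seq (i + 2)) :=
  Finset.disjoint_iff_inter_eq_empty.mpr (Z.isZigzag.2.2.2 i)

lemma Passes.fst_mem {i : ℕ} {a b : V} (h : Z.Passes i a b) : a ∈ Z.seq i := by
  rw [h.1]; exact Finset.mem_insert_self a {b}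

lemma Passes.snd_mem {i : ℕ} {a b : V} (h : Z.Passes i a b) : b ∈ Z.seq i := by
  rw [h.1]; exact Finset.mem_insert_of_mem (Finset.mem_singleton_self b)

lemma exists_passes (Z : T.Zigzag) (i : ℕ) : ∃ a b, Z.Passes i a b := by
  obtain ⟨x, y, hxy, hseq⟩ := Finset.card_eq_two.mp (Z.isZigzag.1 i).1
  obtain ⟨w, hw⟩ := (Z.isZigzag.2.1 i).2.1
  rw [Finset.mem_inter, hseq] at hw
  rcases Finset.mem_insert.mp hw.1 with rfl | hwy
  · exact ⟨y, w, by rw [hseq, Finset.pair_comm], hxy.symm, hw.2⟩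
  · exact ⟨x, w, by rw [hseq, Finset.mem_singleton.mp hwy], Finset.mem_singleton.mp hwy ▸ hxy,
      hw.2⟩

lemma exists_passes_of_mem {i : ℕ} {b : V} (hb : b ∈ Z.seq i) (hb' : b ∈ Z.seq (i + 1)) :
    ∃ c, Z.Passes (i + 1) b c := by
  obtain ⟨b', c, hseq, hb'c, hc⟩ := Z.exists_passes (i + 1)
  have hbc : b ≠ c := fun hbc =>
    Finset.disjoint_left.mp (Z.disjoint_seq_add_two i) hb (hbc ▸ hc)
  rw [hseq, Finset.mem_insert, Finset.mem_singleton] at hb'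
  obtain rfl := hb'.resolve_right hbc
  exact ⟨c, hseq, hb'c, hc⟩

lemma subset_add_two_of_not_subset {F : Finset V} (hF : F ∈ T.faces) {s : ℕ}
    (h0 : ¬ Z.seq s ⊆ F) (h1 : Z.seq (s + 1) ⊆ F) : Z.seq (s + 2) ⊆ F := by
  obtain ⟨-, -, A, hA, hA0, hA1⟩ := Z.isZigzag.2.1 s
  obtain ⟨-, -, H, hH, hH1, hH2⟩ := Z.isZigzag.2.1 (s + 1)
  have hAH : A ≠ H := Z.isZigzag.2.2.1 s A hA H hH hA0 hA1 hH1 hH2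
  rcases eq_or_eq_of_edge_subset (Z.isZigzag.1 (s + 1)).1 hA hH hF hA1 hH1 h1 hAH with rfl | rfl
  · exact absurd hA0 h0
  · exact hH2

/-- `Z` enters the face `F` through the edge `ab` at time `t` and leaves it through `bc`. -/
structure Turn (Z : T.Zigzag) (F : Finset V) (t : ℕ) (a b c : V) : Prop where
  passes_fst : Z.Passes t a b
  passes_snd : Z.Passes (t + 1) b c
  triple_eq : ({a, b, c} : Finset V) = F
  mem_faces : F ∈ T.faces

lemma Passes.exists_turn {t : ℕ} {a b : V} (h : Z.Passes t a b) {F : Finset V}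
    (hF : F ∈ T.faces) (h0 : Z.seq t ⊆ F) (h1 : Z.seq (t + 1) ⊆ F) : ∃ c, Z.Turn F t a b c := by
  obtain ⟨c, hc⟩ := exists_passes_of_mem h.snd_mem h.2.2
  have hac : a ≠ c := by
    rintro rfl
    exact (Z.isZigzag.2.1 t).1 (by rw [h.1, hc.1, Finset.pair_comm])
  exact ⟨c, h, hc, eq_triple_of_mem hF (h0 h.fst_mem) (h0 h.snd_mem) (h1 hc.snd_mem) h.2.1
    hc.2.1 hac, hF⟩

namespace Turn

variable {F : Finset V} {t : ℕ} {a b c : V}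

lemma ne_ac (h : Z.Turn F t a b c) : a ≠ c := by
  rintro rfl
  exact (Z.isZigzag.2.1 t).1 (by rw [h.passes_fst.1, h.passes_snd.1, Finset.pair_comm])

lemma fst_mem (h : Z.Turn F t a b c) : a ∈ F := by rw [← h.triple_eq]; simp

lemma snd_mem (h : Z.Turn F t a b c) : b ∈ F := by rw [← h.triple_eq]; simp

lemma thd_mem (h : Z.Turn F t a b c) : c ∈ F := by rw [← h.triple_eq]; simp

lemma eq_fst_of_mem (h : Z.Turn F t a b c) {x : V} (hx : x ∈ F) (hxb : x ≠ b) (hxc : x ≠ c) :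
    x = a := by
  rw [← h.triple_eq] at hx
  simpa [hxb, hxc] using hx

lemma seq_subset (h : Z.Turn F t a b c) : Z.seq t ⊆ F := by
  rw [h.passes_fst.1, Finset.insert_subset_iff, Finset.singleton_subset_iff]
  exact ⟨h.fst_mem, h.snd_mem⟩

lemma seq_succ_subset (h : Z.Turn F t a b c) : Z.seq (t + 1) ⊆ F := by
  rw [h.passes_snd.1, Finset.insert_subset_iff, Finset.singleton_subset_iff]
  exact ⟨h.snd_mem, h.thd_mem⟩

lemma pair_snd_ne (h : Z.Turn F t a b c) : ({b, c} : Finset V) ≠ {a, b} := by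
  intro he
  have hc : c ∈ ({a, b} : Finset V) := he ▸ by simp
  simp only [Finset.mem_insert, Finset.mem_singleton] at hc
  exact hc.elim (fun hca => h.ne_ac hca.symm) (fun hcb => h.passes_snd.2.1 hcb.symm)

lemma pair_thd_ne (h : Z.Turn F t a b c) : ({c, a} : Finset V) ≠ {a, b} := by
  intro he
  have hb : b ∈ ({c, a} : Finset V) := he ▸ by simp
  simp only [Finset.mem_insert, Finset.mem_singleton] at hb
  exact hb.elim h.passes_snd.2.1 (fun hba => h.passes_fst.2.1 hba.symm)

lemma not_subset_seq_add_two (h : Z.Turn F t a b c) : ¬ Z.seq (t + 2) ⊆ F := by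
  intro hsub
  have hc : Z.seq (t + 2) ⊆ {c} := by
    intro x hx
    have hxt : x ∉ Z.seq t := Finset.disjoint_right.mp (Z.disjoint_seq_add_two t) hx
    have hx' := hsub hx
    rw [← h.triple_eq] at hx'
    rw [h.passes_fst.1] at hxt
    simp only [Finset.mem_insert, Finset.mem_singleton] at hx' hxt ⊢
    tauto
  have := Finset.card_le_card hc
  rw [(Z.isZigzag.1 (t + 2)).1, Finset.card_singleton] at this
  omega

lemma exists_turn_of_subset {G : Finset V} (h : Z.Turn F t a b c) (hG : G ∈ T.faces)
    (hGF : G ≠ F) (hG1 : Z.seq (t + 1) ⊆ G) : ∃ d, Z.Turn G (t + 1) b c d := by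
  obtain ⟨-, -, H, hH, hH1, hH2⟩ := Z.isZigzag.2.1 (t + 1)
  have hFH : F ≠ H := Z.isZigzag.2.2.1 t F h.mem_faces H hH h.seq_subset h.seq_succ_subset hH1 hH2
  obtain rfl : H = G := by
    rcases eq_or_eq_of_edge_subset (Z.isZigzag.1 (t + 1)).1 h.mem_faces hG hH h.seq_succ_subset
      hG1 hH1 hGF.symm with h' | h'
    · exact absurd h'.symm hFH
    · exact h'
  exact h.passes_snd.exists_turn hH hH1 hH2

end Turn

lemma add_lt_of_forall_le {F : Finset V} {t d u : ℕ}
    (hfirst : ∀ m, 1 < m → Z.seq (t + m) ⊆ F → d ≤ m)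
    (hu : t + 1 < u) (huF : Z.seq u ⊆ F) (hne : Z.seq u ≠ Z.seq (t + d)) : t + d < u := by
  obtain ⟨m, rfl⟩ : ∃ m, u = t + m := ⟨u - t, by omega⟩
  rcases (hfirst m (by omega) huF).lt_or_eq with hlt | rfl
  · omega
  · exact absurd rfl hne

end Zigzag

lemma exists_turn_of_MFIsId {F : Finset V} (hM : T.MFIsId F) (hF : F ∈ T.faces) {x y : V}
    (hx : x ∈ F) (hy : y ∈ F) (hxy : x ≠ y) :
    ∃ (Z : T.Zigzag) (i : ℕ) (z : V) (d : ℕ), Z.Turn F i z x y ∧ 1 < d ∧ Z.Passes (i + d) x y ∧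
      ∀ m, 1 < m → Z.seq (i + m) ⊆ F → d ≤ m := by
  obtain ⟨-, -, Z, i, j, ⟨z, hzF, hzx, hzy, hz⟩, hxy', hij, hj, -, -, hnone⟩ := hM x y hx hy hxy
  refine ⟨Z, i, z, j - i, ⟨hz, hxy', eq_triple_of_mem hF hzF hx hy hzx hxy hzy, hF⟩, by omega,
    by rwa [Nat.add_sub_cancel' (by omega)], fun m hm hsub => ?_⟩
  by_contra hlt
  obtain ⟨a, b, hab⟩ := Z.exists_passes (i + m)
  exact hnone (i + m) (by omega) (by omega) a b (hsub hab.fst_mem) (hsub hab.snd_mem) hab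

namespace Zigzag.Turn

variable {Z : T.Zigzag} {F : Finset V} {t : ℕ} {a b c : V}

/-- The zigzag that `M_F = id` provides at `(b, c)` agrees with `Z` from time `t` on, since a
zigzag is determined by two consecutive edges. -/
lemma exists_return (hM : T.MFIsId F) (h : Z.Turn F t a b c) :
    ∃ d, 1 < d ∧ Z.Turn F (t + d) b c a ∧ ∀ m, 1 < m → Z.seq (t + m) ⊆ F → d ≤ m := by
  obtain ⟨Z', i, z, d, hz, hd, hpass, hfirst⟩ :=
    exists_turn_of_MFIsId hM h.mem_faces h.snd_mem h.thd_mem h.passes_snd.2.1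
  obtain rfl : a = z := (h.eq_fst_of_mem hz.fst_mem hz.passes_fst.2.1 hz.ne_ac).symm
  have hshift : ∀ m, Z'.seq (i + m) = Z.seq (t + m) :=
    Z'.isZigzag.apply_add_eq Z.isZigzag (hz.passes_fst.1.trans h.passes_fst.1.symm)
      (hz.passes_snd.1.trans h.passes_snd.1.symm)
  simp only [hshift] at hfirst
  have hpass' : Z.Passes (t + d) b c := by
    refine ⟨by rw [← hshift, hpass.1], hpass.2.1, ?_⟩
    rw [show t + d + 1 = t + (d + 1) by omega, ← hshift]
    exact hpass.2.2
  have hbcF : Z.seq (t + d) ⊆ F := by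
    rw [hpass'.1, ← h.passes_snd.1]
    exact h.seq_succ_subset
  have hd2 : d ≠ 2 := by
    rintro rfl
    exact h.not_subset_seq_add_two hbcF
  have hprev : ¬ Z.seq (t + (d - 1)) ⊆ F := fun hsub => by
    have := hfirst (d - 1) (by omega) hsub
    omega
  have hnext : Z.seq (t + d + 1) ⊆ F := by
    have := Z.subset_add_two_of_not_subset h.mem_faces hprev
      (by rwa [show t + (d - 1) + 1 = t + d by omega])
    rwa [show t + (d - 1) + 2 = t + d + 1 by omega] at this
  obtain ⟨a', ha'⟩ := hpass'.exists_turn h.mem_faces hbcF hnext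
  obtain rfl : a = a' :=
    (h.eq_fst_of_mem ha'.thd_mem ha'.ne_ac.symm ha'.passes_snd.2.1.symm).symm
  exact ⟨d, hd, ha', hfirst⟩

/-- By `exists_return` twice, `Z` next meets `F` along `bc, ca` and then along `ca, ab`. -/
lemma exists_exit (hM : T.MFIsId F) (h : Z.Turn F t a b c) {u : ℕ} (hu : t + 1 < u)
    (hseq : Z.seq u = {a, b}) {e : Finset V} (he : e ⊆ F) (he2 : e.card = 2)
    (hne : e ≠ {a, b}) :
    ∃ s x y w u', t ≤ s ∧ Z.Turn F s x y w ∧ {y, w} = e ∧ s + 2 < u' ∧ u' < u ∧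
      Z.seq u' = e := by
  have huF : Z.seq u ⊆ F := by
    rw [hseq, ← h.passes_fst.1]
    exact h.seq_subset
  obtain ⟨d₁, hd₁, h₁, hfirst₁⟩ := h.exists_return hM
  have hlt₁ : t + d₁ < u := Zigzag.add_lt_of_forall_le hfirst₁ hu huF
    (by rw [hseq, h₁.passes_fst.1]; exact h.pair_snd_ne.symm)
  have hd₁2 : d₁ ≠ 2 := by
    rintro rfl
    exact h.not_subset_seq_add_two h₁.seq_subset
  rw [← h.triple_eq] at he
  rcases Finset.eq_or_eq_or_eq_of_subset_triple he he2 with rfl | rfl | rfl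
  · exact absurd rfl hne
  · exact ⟨t, a, b, c, t + d₁, le_rfl, h, rfl, by omega, hlt₁, h₁.passes_fst.1⟩
  · obtain ⟨d₂, hd₂, h₂, hfirst₂⟩ := h₁.exists_return hM
    have hu₁ : u ≠ t + d₁ + 1 := by
      rintro rfl
      exact h.pair_thd_ne (h₁.passes_snd.1.symm.trans hseq)
    have hlt₂ : t + d₁ + d₂ < u := Zigzag.add_lt_of_forall_le hfirst₂ (by omega) huF
      (by rw [hseq, h₂.passes_fst.1]; exact h.pair_thd_ne.symm)
    have hd₂2 : d₂ ≠ 2 := by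
      rintro rfl
      exact h₁.not_subset_seq_add_two h₂.seq_subset
    exact ⟨t + d₁, b, c, a, t + d₁ + d₂, by omega, h₁, rfl, by omega, hlt₂, h₂.passes_fst.1⟩

lemma exists_turn_across (hM : T.MFIsId F) (h : Z.Turn F t a b c) {u : ℕ} (hu : t + 1 < u)
    (hseq : Z.seq u = {a, b}) {G : Finset V} (hG : G ∈ T.faces) (hFG : F ≠ G)
    (h2 : (F ∩ G).card = 2) (hne : F ∩ G ≠ {a, b}) :
    ∃ s u' x y w, t < s ∧ Z.Turn G s x y w ∧ {x, y} = F ∩ G ∧ s + 1 < u' ∧ u' < u ∧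
      Z.seq u' = {x, y} := by
  obtain ⟨s, x, y, w, u', hts, hs, hyw, hsu, hu'u, hu'⟩ :=
    h.exists_exit hM hu hseq Finset.inter_subset_left h2 hne
  obtain ⟨v, hs'⟩ := hs.exists_turn_of_subset hG hFG.symm
    (by rw [hs.passes_snd.1, hyw]; exact Finset.inter_subset_right)
  exact ⟨s + 1, u', y, w, v, by omega, hs', hyw, by omega, hu'u, hyw ▸ hu'⟩

end Zigzag.Turn

lemma exists_turn_across_of_MFIsId {F G : Finset V} (hM : T.MFIsId F) (hF : F ∈ T.faces)
    (hG : G ∈ T.faces) (hFG : F ≠ G) (h2 : (F ∩ G).card = 2) :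
    ∃ (Z : T.Zigzag) (i d t : ℕ) (a b c : V), Z.Turn G t a b c ∧ {a, b} = F ∩ G ∧ i < t ∧
      t + 1 < i + d ∧ Z.seq (i + d) = {a, b} ∧ ∀ m, 1 < m → Z.seq (i + m) ⊆ F → d ≤ m := by
  obtain ⟨x, y, hxy, hxyFG⟩ := Finset.card_eq_two.mp h2
  have hx : x ∈ F ∩ G := by rw [hxyFG]; simp
  have hy : y ∈ F ∩ G := by rw [hxyFG]; simp
  obtain ⟨Z, i, z, d, h₀, hd, hret, hfirst⟩ :=
    exists_turn_of_MFIsId hM hF (Finset.mem_inter.mp hx).1 (Finset.mem_inter.mp hy).1 hxy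
  obtain ⟨w, h₁⟩ := h₀.exists_turn_of_subset hG hFG.symm
    (by rw [h₀.passes_snd.1, ← hxyFG]; exact Finset.inter_subset_right)
  have hd2 : d ≠ 2 := by
    rintro rfl
    exact h₀.not_subset_seq_add_two (by rw [hret.1, ← h₀.passes_snd.1]; exact h₀.seq_succ_subset)
  exact ⟨Z, i, d, i + 1, x, y, w, h₁, hxyFG.symm, by omega, by omega, hret.1, hfirst⟩

theorem false_of_closed_nonbacktracking_walk (F : ℕ → Finset V) {n : ℕ} (hn : 2 ≤ n)
    (hF : ∀ k < n, F k ∈ T.faces) (hM : ∀ k < n, T.MFIsId (F k)) (hclosed : F n = F 0)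
    (hadj : ∀ k < n, F k ≠ F (k + 1) ∧ (F k ∩ F (k + 1)).card = 2)
    (hnb : ∀ k, k + 2 ≤ n → F (k + 2) ≠ F k) : False := by
  have hF' : ∀ k ≤ n, F k ∈ T.faces := fun k hk => by
    rcases hk.lt_or_eq with hk | rfl
    · exact hF k hk
    · exact hclosed ▸ hF 0 (by omega)
  have hedge_ne : ∀ k, k + 2 ≤ n → F (k + 1) ∩ F (k + 2) ≠ F k ∩ F (k + 1) := fun k hk =>
    inter_ne_inter (hF' k (by omega)) (hF' (k + 1) (by omega)) (hF' (k + 2) hk)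
      (hadj k (by omega)).1 (hadj (k + 1) (by omega)).1 (hnb k hk) (hadj k (by omega)).2
  obtain ⟨m, rfl⟩ := Nat.exists_eq_add_of_le' hn
  obtain ⟨Z, i, d, t₁, a₁, b₁, c₁, h₁, hab₁, hit₁, ht₁, hret, hfirst⟩ :=
    exists_turn_across_of_MFIsId (hM 0 (by omega)) (hF 0 (by omega)) (hF 1 (by omega))
      (hadj 0 (by omega)).1 (hadj 0 (by omega)).2
  have hwalk : ∀ k ≤ m, ∃ t u a b c, Z.Turn (F (k + 1)) t a b c ∧ {a, b} = F k ∩ F (k + 1) ∧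
      i < t ∧ t + 1 < u ∧ u ≤ i + d ∧ Z.seq u = {a, b} := by
    intro k
    induction k with
    | zero => exact fun _ => ⟨t₁, i + d, a₁, b₁, c₁, h₁, hab₁, hit₁, ht₁, le_rfl, hret⟩
    | succ k ih =>
      intro hk
      obtain ⟨t, u, a, b, c, h, hab, hit, htu, hud, hu⟩ := ih (by omega)
      obtain ⟨s, u', a', b', c', hts, hs, hab', hsu, huu, hu'⟩ := h.exists_turn_across
        (hM (k + 1) (by omega)) htu hu (hF (k + 2) (by omega)) (hadj (k + 1) (by omega)).1
        (hadj (k + 1) (by omega)).2 (hab ▸ hedge_ne k (by omega))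
      exact ⟨s, u', a', b', c', hs, hab', by omega, hsu, by omega, hu'⟩
  obtain ⟨t, u, a, b, c, h, hab, hit, htu, hud, hu⟩ := hwalk m le_rfl
  obtain ⟨s, x', y', w', u', hts, hs, hyw, hsu, huu, -⟩ := h.exists_exit (hM (m + 1) (by omega))
    htu hu Finset.inter_subset_left (hadj (m + 1) (by omega)).2 (hab ▸ hedge_ne m le_rfl)
  have hback : Z.seq (i + (s + 1 - i)) ⊆ F 0 := by
    rw [Nat.add_sub_cancel' (by omega), hs.passes_snd.1, hyw, ← hclosed]
    exact Finset.inter_subset_right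
  have := hfirst (s + 1 - i) (by omega) hback
  omega

end Triangulation

/-- the subgraph `G₁` of the dual graph induced by the faces
with identity z-monodromy (type (M1)) is a forest. -/
theorem G1_is_forest {V : Type} [Fintype V] [DecidableEq V]
    (T : Triangulation V) :
    (T.dualGraph.induce
      {A : {F : Finset V // F ∈ T.faces} | T.MFIsId (A : Finset V)}).IsAcyclic := by
  intro v c hc
  have hadj : ∀ k < c.length, T.dualGraph.Adj (c.getVert k) (c.getVert (k + 1)) :=
    fun k hk => c.adj_getVert_succ hk
  refine T.false_of_closed_nonbacktracking_walk (fun k => (c.getVert k : Finset V))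
    (by linarith [hc.three_le_length]) (fun k _ => (c.getVert k).1.2) (fun k _ => (c.getVert k).2)
    (by simp only [SimpleGraph.Walk.getVert_length, SimpleGraph.Walk.getVert_zero])
    (fun k hk => ⟨fun h => (hadj k hk).1 (Subtype.ext h), (hadj k hk).2⟩)
    (fun k hk h => ?_)
  exact hc.getVert_sub_one_ne_getVert_add_one (i := k + 1) (by omega)
    (Subtype.ext (Subtype.ext h)).symm
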